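/- arXiv:1906.04672 — 2 statements merged into one kernel-verified Lean document; each statement's English description precedes it below -/
import Mathlib

section
/- Let T be an n-tournament with Seidel adjacency matrix S, and let δ_T be the number of 4-element vertex subsets of T inducing a diamond. Then the sum over all 4-element subsets I of {1,…,n} of the determinant of the 4×4 principal submatrix S[I] equals 8·δ_T + C(n,4). -/
open Finset Matrix

variable {V : Type*} [Fintype V] [DecidableEq V]

/-- A tournament given by a dominance function: `T i j = true` means `i` dominates `j`. -/
def IsTournament (T : V → V → Bool) : Prop :=
  (∀ i, T i i = false) ∧ ∀ i j, i ≠ j → T i j = !T j i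

/-- The 0-1 adjacency matrix of a tournament. -/
def adj (T : V → V → Bool) : Matrix V V ℤ :=
  Matrix.of fun i j => if T i j then 1 else 0

/-- The Seidel adjacency matrix `S = A - Aᵀ` of a tournament. -/
def seidel (T : V → V → Bool) : Matrix V V ℤ :=
  adj T - (adj T)ᵀ

/-- Number of 3-element subsets of `W` inducing a 3-cycle (each vertex dominates
exactly one other vertex of the triple). -/
def numC3On (T : V → V → Bool) (W : Finset V) : ℕ :=
  ((W.powersetCard 3).filter fun t => ∀ v ∈ t, (t.filter fun w => T v w).card = 1).card

/-- Number of 4-element subsets of `W` inducing a diamond, i.e. containing exactly one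
3-element subset that induces a 3-cycle. -/
def numDiamondsOn (T : V → V → Bool) (W : Finset V) : ℕ :=
  ((W.powersetCard 4).filter fun s =>
    ((s.powersetCard 3).filter fun t => ∀ v ∈ t, (t.filter fun w => T v w).card = 1).card
      = 1).card

/-- `δ_T`, the number of 4-element vertex subsets inducing a diamond. -/
def numDiamonds (T : V → V → Bool) : ℕ := numDiamondsOn T Finset.univ

/-- `c₃(T)`, the number of 3-element vertex subsets inducing a 3-cycle. -/
def numC3 (T : V → V → Bool) : ℕ := numC3On T Finset.univ

/-! The Seidel matrix of a tournament is skew-symmetric with off-diagonal entries `±1`, so each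
`4 × 4` principal minor is the square of the Pfaffian `s₀₁s₂₃ - s₀₂s₁₃ + s₀₃s₁₂`, a sum of three
signs, and hence equals `1` or `9`. Checking the `2⁶` tournaments on four vertices shows that it is
`9` exactly when the four vertices span a diamond. Summing `1 + 8·[diamond]` over all `4`-subsets
gives `C(n,4) + 8·δ_T`. -/

theorem Matrix.det_fin_four_eq_sq_of_skew {R : Type*} [CommRing R] (A : Matrix (Fin 4) (Fin 4) R)
    (hdiag : ∀ i, A i i = 0) (hskew : ∀ i j, A j i = -A i j) :
    A.det = (A 0 1 * A 2 3 - A 0 2 * A 1 3 + A 0 3 * A 1 2) ^ 2 := by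
  simp only [det_succ_row_zero, Fin.sum_univ_succ]
  simp [Fin.succAbove, hdiag, hskew 1 0, hskew 2 0, hskew 3 0, hskew 2 1, hskew 3 1, hskew 3 2]
  ring

section

variable {α β : Type*}

theorem seidel_apply_self (T : α → α → Bool) (i : α) : seidel T i i = 0 := by
  simp [seidel]

theorem seidel_apply_swap (T : α → α → Bool) (i j : α) : seidel T j i = -seidel T i j := by
  simp [seidel]

theorem seidel_submatrix (T : β → β → Bool) (e : α → β) :
    (seidel T).submatrix e e = seidel fun a b => T (e a) (e b) := by
  ext a b
  simp [seidel, adj]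

theorem IsTournament.comp {T : β → β → Bool} (hT : IsTournament T) {e : α → β}
    (he : Function.Injective e) : IsTournament fun a b => T (e a) (e b) :=
  ⟨fun a => hT.1 (e a), fun _ _ hab => hT.2 _ _ (he.ne hab)⟩

def cyclicTriples (T : α → α → Bool) (s : Finset α) : Finset (Finset α) :=
  (s.powersetCard 3).filter fun t => ∀ v ∈ t, (t.filter fun w => T v w).card = 1

theorem cyclicTriples_map (T : β → β → Bool) (e : α ↪ β) (s : Finset α) :
    cyclicTriples T (s.map e) =
      (cyclicTriples (fun a b => T (e a) (e b)) s).map (mapEmbedding e).toEmbedding := by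
  simp only [cyclicTriples, powersetCard_map, filter_map]
  congr 2
  ext t
  simp [filter_map]

theorem numDiamondsOn_eq_card_filter [Fintype α] [DecidableEq α] (T : α → α → Bool)
    (W : Finset α) :
    numDiamondsOn T W = #{s ∈ W.powersetCard 4 | #(cyclicTriples T s) = 1} := by
  -- `numDiamondsOn` decides `∀ v ∈ t` through `Fintype α`, so the instances agree only up to
  -- subsingleton elimination
  unfold numDiamondsOn cyclicTriples
  congr!

end

def finFourTournament (p q r u v w : Bool) : Fin 4 → Fin 4 → Bool
  | 0, 1 => p | 1, 0 => !p
  | 0, 2 => q | 2, 0 => !q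
  | 0, 3 => r | 3, 0 => !r
  | 1, 2 => u | 2, 1 => !u
  | 1, 3 => v | 3, 1 => !v
  | 2, 3 => w | 3, 2 => !w
  | _, _ => false

theorem IsTournament.eq_finFourTournament {T : Fin 4 → Fin 4 → Bool} (hT : IsTournament T) :
    T = finFourTournament (T 0 1) (T 0 2) (T 0 3) (T 1 2) (T 1 3) (T 2 3) := by
  funext i j
  fin_cases i <;> fin_cases j <;> first | exact hT.1 _ | rfl | exact hT.2 _ _ (by decide)

theorem IsTournament.seidel_pfaffian_sq {T : Fin 4 → Fin 4 → Bool} (hT : IsTournament T) :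
    (seidel T 0 1 * seidel T 2 3 - seidel T 0 2 * seidel T 1 3 + seidel T 0 3 * seidel T 1 2) ^ 2
      = if #(cyclicTriples T univ) = 1 then 9 else 1 := by
  rw [hT.eq_finFourTournament]
  generalize T 0 1 = p, T 0 2 = q, T 0 3 = r, T 1 2 = u, T 1 3 = v, T 2 3 = w
  revert p q r u v w
  decide

theorem IsTournament.det_seidel_fin_four {T : Fin 4 → Fin 4 → Bool} (hT : IsTournament T) :
    (seidel T).det = if #(cyclicTriples T univ) = 1 then 9 else 1 := by
  rw [det_fin_four_eq_sq_of_skew _ (seidel_apply_self T) (seidel_apply_swap T),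
    hT.seidel_pfaffian_sq]

theorem IsTournament.det_seidel_submatrix_orderEmbOfFin {α : Type*} [LinearOrder α]
    {T : α → α → Bool} (hT : IsTournament T) (s : Finset α) (hs : s.card = 4) :
    ((seidel T).submatrix (s.orderEmbOfFin hs) (s.orderEmbOfFin hs)).det
      = if #(cyclicTriples T s) = 1 then 9 else 1 := by
  set e := s.orderEmbOfFin hs
  have hs_map : s = univ.map e.toEmbedding := by
    apply coe_injective
    simp [e]
  rw [seidel_submatrix, (hT.comp e.injective).det_seidel_fin_four, hs_map, cyclicTriples_map,
    card_map]
  rfl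

/-- The sum of all `4×4` principal minors of the Seidel adjacency matrix of an
`n`-tournament is `8·δ_T + C(n,4)`. -/
theorem stmt_1 {n : ℕ} (T : Fin n → Fin n → Bool) (hT : IsTournament T) :
    ∑ s ∈ ((Finset.univ : Finset (Fin n)).powersetCard 4).attach,
      ((seidel T).submatrix
        (s.1.orderEmbOfFin (Finset.mem_powersetCard.mp s.2).2)
        (s.1.orderEmbOfFin (Finset.mem_powersetCard.mp s.2).2)).det
      = 8 * (numDiamonds T : ℤ) + (n.choose 4 : ℤ) := by
  have hminor : ∀ s : Finset (Fin n), (if #(cyclicTriples T s) = 1 then 9 else 1 : ℤ)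
      = 8 * (if #(cyclicTriples T s) = 1 then 1 else 0) + 1 := by
    intro s; split_ifs <;> norm_num
  calc _ = ∑ s ∈ univ.powersetCard 4, (if #(cyclicTriples T s) = 1 then 9 else 1 : ℤ) :=
        (sum_congr rfl fun s _ => hT.det_seidel_submatrix_orderEmbOfFin s.1 _).trans
          (sum_attach _ fun s => if #(cyclicTriples T s) = 1 then 9 else 1)
    _ = 8 * (numDiamonds T : ℤ) + (n.choose 4 : ℤ) := by
        simp only [numDiamonds, numDiamondsOn_eq_card_filter, hminor, sum_add_distrib, ← mul_sum,
          sum_boole, sum_const, card_powersetCard, card_univ, Fintype.card_fin, nsmul_eq_mul,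
          mul_one]
end

section
/- Let T be an n-tournament with n odd and Seidel adjacency matrix S. Then δ_T ≤ n(n−1)(n−3)(n+1)/96, with equality if and only if every off-diagonal entry of S² + n·I_n has absolute value 1, i.e. |S² + n·I_n| = J_n (the all-ones matrix), where |M| is the entrywise absolute value. -/
open Finset Matrix

variable {V : Type*} [Fintype V] [DecidableEq V]

/-!
Let `N = S² + n·I`. Off the diagonal `S` has entries `±1` and `Sᵀ = -S`, so `N i i = 1`, and
for `i ≠ j` the entry `N i j = ∑_{k ≠ i, j} S i k * S k j` is a sum of `n - 2` signs, hence odd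
when `n` is odd; thus `N i j ^ 2 ≥ 1` for all `i, j`.

Squaring, `∑_{i ≠ j} N i j ^ 2` is a sum of signed closed walks `i → k → j → l → i`. Those with
`k = l` contribute `n (n - 1) (n - 2)`; the others run through four distinct vertices. On a
4-set the signed products of its three 4-cycles add up to `1 - 4·[the set induces a diamond]`,
and every 4-set is visited by `4!` tuples, so
`96 δ_T + 3 ∑_{i,j} (N i j ^ 2 - 1) = n (n - 1) (n - 3) (n + 1)`.
Both the bound and its equality case can be read off this identity.
-/

section Embeddings

variable {α ι M : Type*} [Fintype α] [Fintype ι] [AddCommMonoid M]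

lemma sum_embedding_comp_perm (σ : Equiv.Perm ι) (F : (ι ↪ α) → M) :
    ∑ f : ι ↪ α, F (σ.toEmbedding.trans f) = ∑ f, F f :=
  Fintype.sum_equiv (Equiv.embeddingCongr σ.symm (Equiv.refl α)) _ _ fun _ => rfl

variable [DecidableEq α]

lemma card_filter_map_univ_eq (s : Finset α) (hs : s.card = Fintype.card ι) :
    (Finset.univ.filter fun f : ι ↪ α => Finset.univ.map f = s).card
      = (Fintype.card ι).factorial := by
  have hmap (g : ι ↪ s) : Finset.univ.map (g.trans (Function.Embedding.subtype _)) = s := by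
    refine Finset.eq_of_subset_of_card_le (fun v hv => ?_) (by simp [hs])
    obtain ⟨i, -, rfl⟩ := Finset.mem_map.1 hv
    exact (g i).2
  calc _ = (Finset.univ : Finset (ι ↪ s)).card := by
        refine (Finset.card_bij (fun g _ => g.trans (Function.Embedding.subtype _))
          (fun g _ => by simpa using hmap g) (fun g₁ _ g₂ _ h => ?_) fun f hf => ?_).symm
        · ext i
          exact congrArg (· i) h
        · have hf : Finset.univ.map f = s := (Finset.mem_filter.1 hf).2
          exact ⟨⟨fun i => ⟨f i, hf ▸ Finset.mem_map_of_mem f (Finset.mem_univ i)⟩,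
            fun i j h => f.injective (congrArg Subtype.val h)⟩, Finset.mem_univ _, rfl⟩
    _ = (Fintype.card ι).factorial := by
        rw [Finset.card_univ, Fintype.card_embedding_eq, Fintype.card_coe, hs,
          Nat.descFactorial_self]

lemma sum_embedding_map_univ (G : Finset α → M) :
    ∑ f : ι ↪ α, G (Finset.univ.map f)
      = (Fintype.card ι).factorial • ∑ s ∈ Finset.univ.powersetCard (Fintype.card ι), G s := by
  rw [← Finset.sum_fiberwise_of_maps_to (g := fun f : ι ↪ α => Finset.univ.map f)
    (t := Finset.univ.powersetCard (Fintype.card ι)) (fun f _ => by simp), Finset.smul_sum]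
  refine Finset.sum_congr rfl fun s hs => ?_
  rw [Finset.sum_congr rfl fun f hf => congrArg G (Finset.mem_filter.1 hf).2, Finset.sum_const,
    card_filter_map_univ_eq s (Finset.mem_powersetCard.1 hs).2]

variable [DecidableEq ι]

lemma sum_embedding_eq_sum_injective (g : (ι → α) → M) :
    ∑ f : ι ↪ α, g f = ∑ x : ι → α, if Function.Injective x then g x else 0 := by
  rw [← Finset.sum_filter]
  exact Finset.sum_bij' (fun f _ => f) (fun x hx => ⟨x, (Finset.mem_filter.1 hx).2⟩)
    (fun f _ => by simpa using f.injective) (fun _ _ => Finset.mem_univ _)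
    (fun _ _ => rfl) (fun _ _ => rfl) (fun _ _ => rfl)

end Embeddings

lemma sum_pi_fin_succ {α M : Type*} [Fintype α] [AddCommMonoid M] {n : ℕ}
    (g : (Fin (n + 1) → α) → M) : ∑ x, g x = ∑ a, ∑ y : Fin n → α, g (Fin.cons a y) := by
  rw [← Fintype.sum_prod_type']
  exact Fintype.sum_equiv (Fin.consEquiv fun _ => α).symm _ _ fun x => by simp

lemma sum_pi_fin_four {α M : Type*} [Fintype α] [AddCommMonoid M] (g : (Fin 4 → α) → M) :
    ∑ x, g x = ∑ a, ∑ b, ∑ c, ∑ d, g ![a, b, c, d] := by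
  simp only [sum_pi_fin_succ, Fintype.sum_unique]
  rfl

lemma sum_ite_ne_mul_ite_ne {R : Type*} [CommRing R] {i j : V} (h : i ≠ j) :
    ∑ k, (if i = k then (0 : R) else 1) * (if k = j then 0 else 1) = Fintype.card V - 2 := by
  have hk (k : V) : (if i = k then (0 : R) else 1) * (if k = j then 0 else 1)
      = 1 - (if i = k then 1 else 0) - (if k = j then 1 else 0) := by
    by_cases hik : i = k <;> by_cases hkj : k = j <;> simp_all
  simp only [hk, sum_sub_distrib, sum_ite_eq, sum_ite_eq', mem_univ, if_true, sum_const,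
    card_univ, nsmul_eq_mul, mul_one]
  ring

lemma sum_sum_ite_ne {R : Type*} [CommRing R] (c : R) :
    ∑ i : V, ∑ j : V, (if i ≠ j then c else 0) = Fintype.card V * (Fintype.card V - 1) * c := by
  have h (i j : V) : (if i ≠ j then c else 0) = c - if i = j then c else 0 := by
    split_ifs <;> simp_all
  simp only [h, sum_sub_distrib, sum_ite_eq, mem_univ, if_true, sum_const, card_univ,
    nsmul_eq_mul]
  ring

omit [Fintype V] [DecidableEq V] in
lemma seidel_apply (T : V → V → Bool) (i j : V) :
    seidel T i j = (if T i j then 1 else 0) - (if T j i then 1 else 0) := rfl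

omit [Fintype V] [DecidableEq V] in
lemma seidel_self (T : V → V → Bool) (i : V) : seidel T i i = 0 := by
  simp [seidel_apply]

omit [Fintype V] [DecidableEq V] in
lemma seidel_swap (T : V → V → Bool) (i j : V) : seidel T j i = -seidel T i j := by
  simp [seidel_apply]

lemma seidel_sq_add_apply_of_ne (T : V → V → Bool) (c : ℤ) {i j : V} (h : i ≠ j) :
    (seidel T ^ 2 + c • (1 : Matrix V V ℤ)) i j = (seidel T ^ 2) i j := by
  rw [Matrix.add_apply, Matrix.smul_apply, one_apply_ne h, smul_zero, add_zero]

def cycleProduct (T : V → V → Bool) (a b c d : V) : ℤ :=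
  seidel T a b * seidel T b c * seidel T c d * seidel T d a

lemma sq_seidel_sq_apply (T : V → V → Bool) (i j : V) :
    ((seidel T ^ 2) i j) ^ 2 = ∑ k, ∑ l, cycleProduct T i k j l := by
  rw [sq, sq, mul_apply, sum_mul_sum]
  refine sum_congr rfl fun k _ => sum_congr rfl fun l _ => ?_
  rw [cycleProduct, seidel_swap T l i, seidel_swap T j l]
  ring

lemma sum_ite_cycleProduct_eq_sum_embedding (T : V → V → Bool) :
    ∑ a, ∑ b, ∑ c, ∑ d, (if a ≠ c ∧ b ≠ d then cycleProduct T a b c d else 0)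
      = ∑ f : Fin 4 ↪ V, cycleProduct T (f 0) (f 1) (f 2) (f 3) := by
  rw [sum_embedding_eq_sum_injective fun x => cycleProduct T (x 0) (x 1) (x 2) (x 3),
    sum_pi_fin_four]
  refine sum_congr rfl fun a _ => sum_congr rfl fun b _ => sum_congr rfl fun c _ =>
    sum_congr rfl fun d _ => ?_
  by_cases h : cycleProduct T a b c d = 0
  · simp [h]
  have hab : a ≠ b := by rintro rfl; simp [cycleProduct, seidel_self] at h
  have hbc : b ≠ c := by rintro rfl; simp [cycleProduct, seidel_self] at h
  have hcd : c ≠ d := by rintro rfl; simp [cycleProduct, seidel_self] at h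
  have hda : d ≠ a := by rintro rfl; simp [cycleProduct, seidel_self] at h
  have hinj : Function.Injective ![a, b, c, d] ↔ a ≠ c ∧ b ≠ d := by
    simp [Function.Injective, Fin.forall_fin_succ]
    grind
  simp only [hinj]
  rfl

lemma numC3On_map {U : Type*} [Fintype U] [DecidableEq U] (T : V → V → Bool) (f : U ↪ V)
    (s : Finset U) : numC3On T (s.map f) = numC3On (fun i j => T (f i) (f j)) s := by
  simp only [numC3On, powersetCard_map, filter_map, card_map]
  congr 1
  refine filter_congr fun t _ => ?_
  simp [filter_map]

def tournamentFinFour (b₀₁ b₀₂ b₀₃ b₁₂ b₁₃ b₂₃ : Bool) : Fin 4 → Fin 4 → Bool :=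
  ![![false, b₀₁, b₀₂, b₀₃], ![!b₀₁, false, b₁₂, b₁₃], ![!b₀₂, !b₁₂, false, b₂₃],
    ![!b₀₃, !b₁₃, !b₂₃, false]]

lemma IsTournament.eq_tournamentFinFour {T : Fin 4 → Fin 4 → Bool} (hT : IsTournament T) :
    T = tournamentFinFour (T 0 1) (T 0 2) (T 0 3) (T 1 2) (T 1 3) (T 2 3) := by
  funext i j
  fin_cases i <;> fin_cases j <;> simp [tournamentFinFour, hT.1] <;> exact hT.2 _ _ (by decide)

/-- A tournament on `Fin 4` is determined by its six arcs between `i < j`, so the identity is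
checked on all 64 of them. -/
lemma IsTournament.cycleProduct_add_add_fin_four {T : Fin 4 → Fin 4 → Bool}
    (hT : IsTournament T) :
    cycleProduct T 0 1 2 3 + cycleProduct T 0 1 3 2 + cycleProduct T 0 2 1 3
      = 1 - 4 * if numC3On T univ = 1 then 1 else 0 := by
  rw [hT.eq_tournamentFinFour]
  generalize T 0 1 = b₀₁, T 0 2 = b₀₂, T 0 3 = b₀₃, T 1 2 = b₁₂, T 1 3 = b₁₃, T 2 3 = b₂₃
  revert b₀₁ b₀₂ b₀₃ b₁₂ b₁₃ b₂₃
  decide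

section Tournament

variable {T : V → V → Bool}

omit [Fintype V] [DecidableEq V] in
lemma IsTournament.comp_embedding {U : Type*} (hT : IsTournament T) (f : U ↪ V) :
    IsTournament fun i j => T (f i) (f j) :=
  ⟨fun i => hT.1 (f i), fun i j h => hT.2 (f i) (f j) (f.injective.ne h)⟩

omit [Fintype V] in
lemma IsTournament.seidel_mul_self (hT : IsTournament T) (i j : V) :
    seidel T i j * seidel T i j = if i = j then 0 else 1 := by
  by_cases h : i = j
  · simp [h, seidel_self]
  · rw [seidel_apply, hT.2 i j h]
    cases T j i <;> simp [h]

omit [Fintype V] in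
lemma IsTournament.intCast_seidel (hT : IsTournament T) (i j : V) :
    ((seidel T i j : ℤ) : ZMod 2) = if i = j then 0 else 1 := by
  by_cases h : i = j
  · simp [h, seidel_self]
  · rw [seidel_apply, hT.2 i j h]
    cases T j i <;> simp [h]

lemma IsTournament.seidel_sq_apply_self (hT : IsTournament T) (i : V) :
    (seidel T ^ 2) i i = 1 - Fintype.card V := by
  have hk (k : V) : seidel T i k * seidel T k i = (if i = k then 1 else 0) - 1 := by
    rw [seidel_swap T i k, mul_neg, hT.seidel_mul_self]
    split_ifs <;> ring
  simp [sq, mul_apply, hk]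

lemma IsTournament.intCast_seidel_sq_apply_of_ne (hT : IsTournament T) {i j : V} (h : i ≠ j) :
    (((seidel T ^ 2) i j : ℤ) : ZMod 2) = Fintype.card V := by
  rw [sq, mul_apply]
  push_cast
  simp only [hT.intCast_seidel]
  rw [sum_ite_ne_mul_ite_ne h, sub_eq_add_neg, add_eq_left]
  decide

lemma IsTournament.odd_seidel_sq_apply (hT : IsTournament T) (hn : Odd (Fintype.card V))
    {i j : V} (h : i ≠ j) : Odd ((seidel T ^ 2) i j) := by
  rw [← ZMod.intCast_eq_one_iff_odd, hT.intCast_seidel_sq_apply_of_ne h,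
    ZMod.natCast_eq_one_iff_odd]
  exact hn

lemma IsTournament.seidel_sq_add_apply_self (hT : IsTournament T) (i : V) :
    (seidel T ^ 2 + (Fintype.card V : ℤ) • (1 : Matrix V V ℤ)) i i = 1 := by
  rw [Matrix.add_apply, Matrix.smul_apply, one_apply_eq, hT.seidel_sq_apply_self, smul_eq_mul,
    mul_one, sub_add_cancel]

lemma IsTournament.one_le_sq_seidel_sq_add_apply (hT : IsTournament T)
    (hn : Odd (Fintype.card V)) (i j : V) :
    1 ≤ ((seidel T ^ 2 + (Fintype.card V : ℤ) • (1 : Matrix V V ℤ)) i j) ^ 2 := by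
  by_cases h : i = j
  · rw [h, hT.seidel_sq_add_apply_self, one_pow]
  · rw [seidel_sq_add_apply_of_ne T _ h, one_le_sq_iff_one_le_abs]
    exact Int.one_le_abs fun h0 => by simpa [h0] using hT.odd_seidel_sq_apply hn h

lemma IsTournament.sq_seidel_sq_apply_of_ne (hT : IsTournament T) {i j : V} (h : i ≠ j) :
    ((seidel T ^ 2) i j) ^ 2
      = Fintype.card V - 2 + ∑ k, ∑ l, if k ≠ l then cycleProduct T i k j l else 0 := by
  have hdiag (k : V) : cycleProduct T i k j k
      = (if i = k then 0 else 1) * (if k = j then 0 else 1) := by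
    rw [← hT.seidel_mul_self, ← hT.seidel_mul_self, cycleProduct, seidel_swap T k j,
      seidel_swap T i k]
    ring
  have hsplit (k : V) : ∑ l, cycleProduct T i k j l
      = cycleProduct T i k j k + ∑ l, if k ≠ l then cycleProduct T i k j l else 0 := by
    rw [← sum_filter, filter_ne, add_sum_erase _ _ (mem_univ k)]
  simp only [sq_seidel_sq_apply, hsplit, sum_add_distrib, hdiag, sum_ite_ne_mul_ite_ne h]

lemma IsTournament.sq_seidel_sq_add_apply_sub_one (hT : IsTournament T) (i j : V) :
    ((seidel T ^ 2 + (Fintype.card V : ℤ) • (1 : Matrix V V ℤ)) i j) ^ 2 - 1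
      = (if i ≠ j then (Fintype.card V : ℤ) - 3 else 0)
        + ∑ k, ∑ l, if i ≠ j ∧ k ≠ l then cycleProduct T i k j l else 0 := by
  by_cases h : i = j
  · rw [h, hT.seidel_sq_add_apply_self]
    simp
  · simp only [seidel_sq_add_apply_of_ne T _ h, hT.sq_seidel_sq_apply_of_ne h, ne_eq, h,
      not_false_eq_true, true_and, if_true]
    ring

lemma IsTournament.cycleProduct_add_add (hT : IsTournament T) (f : Fin 4 ↪ V) :
    cycleProduct T (f 0) (f 1) (f 2) (f 3) + cycleProduct T (f 0) (f 1) (f 3) (f 2)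
        + cycleProduct T (f 0) (f 2) (f 1) (f 3)
      = 1 - 4 * if numC3On T (univ.map f) = 1 then 1 else 0 := by
  rw [numC3On_map]
  exact (hT.comp_embedding f).cycleProduct_add_add_fin_four

lemma IsTournament.three_mul_sum_cycleProduct (hT : IsTournament T) :
    3 * ∑ f : Fin 4 ↪ V, cycleProduct T (f 0) (f 1) (f 2) (f 3)
      = (Fintype.card V).descFactorial 4 - 96 * numDiamonds T := by
  have hswap₂₃ : ∑ f : Fin 4 ↪ V, cycleProduct T (f 0) (f 1) (f 3) (f 2)
      = ∑ f : Fin 4 ↪ V, cycleProduct T (f 0) (f 1) (f 2) (f 3) :=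
    sum_embedding_comp_perm (Equiv.swap (2 : Fin 4) 3)
      fun f => cycleProduct T (f 0) (f 1) (f 2) (f 3)
  have hswap₁₂ : ∑ f : Fin 4 ↪ V, cycleProduct T (f 0) (f 2) (f 1) (f 3)
      = ∑ f : Fin 4 ↪ V, cycleProduct T (f 0) (f 1) (f 2) (f 3) :=
    sum_embedding_comp_perm (Equiv.swap (1 : Fin 4) 2)
      fun f => cycleProduct T (f 0) (f 1) (f 2) (f 3)
  have hδ : ∑ s ∈ univ.powersetCard 4, (if numC3On T s = 1 then (1 : ℤ) else 0)
      = numDiamonds T := by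
    rw [sum_boole]
    rfl
  calc 3 * ∑ f : Fin 4 ↪ V, cycleProduct T (f 0) (f 1) (f 2) (f 3)
      = ∑ f : Fin 4 ↪ V, (cycleProduct T (f 0) (f 1) (f 2) (f 3)
          + cycleProduct T (f 0) (f 1) (f 3) (f 2) + cycleProduct T (f 0) (f 2) (f 1) (f 3)) := by
        rw [sum_add_distrib, sum_add_distrib, hswap₂₃, hswap₁₂]
        ring
    _ = ∑ f : Fin 4 ↪ V, (1 - 4 * if numC3On T (univ.map f) = 1 then 1 else 0) :=
        sum_congr rfl fun f _ => hT.cycleProduct_add_add f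
    _ = (Fintype.card V).descFactorial 4 - 96 * numDiamonds T := by
        rw [sum_sub_distrib, ← mul_sum, sum_embedding_map_univ
          (fun s => if numC3On T s = 1 then (1 : ℤ) else 0)]
        simp [Fintype.card_embedding_eq, hδ]
        ring

lemma IsTournament.diamond_identity (hT : IsTournament T) :
    96 * (numDiamonds T : ℤ)
        + 3 * ∑ i, ∑ j, (((seidel T ^ 2 + (Fintype.card V : ℤ) • (1 : Matrix V V ℤ)) i j) ^ 2 - 1)
      = Fintype.card V * (Fintype.card V - 1) * (Fintype.card V - 3) * (Fintype.card V + 1) := by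
  have hwalks : ∑ i, ∑ j, ∑ k, ∑ l,
      (if i ≠ j ∧ k ≠ l then cycleProduct T i k j l else 0)
        = ∑ f : Fin 4 ↪ V, cycleProduct T (f 0) (f 1) (f 2) (f 3) := by
    rw [← sum_ite_cycleProduct_eq_sum_embedding]
    exact sum_congr rfl fun i _ => sum_comm
  have hcycles := hT.three_mul_sum_cycleProduct
  rw [← descPochhammer_eval_eq_descFactorial ℤ] at hcycles
  simp only [descPochhammer_succ_eval, descPochhammer_zero, Polynomial.eval_one] at hcycles
  simp only [hT.sq_seidel_sq_add_apply_sub_one, sum_add_distrib, sum_sum_ite_ne, hwalks]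
  linear_combination hcycles

end Tournament

/-- For `n` odd, `δ_T ≤ n(n−1)(n−3)(n+1)/96`, with equality iff every entry of
`S² + n·I_n` has absolute value 1, i.e. `|S² + n·I_n| = J_n`. -/
theorem stmt_12 {n : ℕ} (hn : Odd n) (T : Fin n → Fin n → Bool) (hT : IsTournament T) :
    (numDiamonds T : ℚ) ≤ (n : ℚ) * ((n : ℚ) - 1) * ((n : ℚ) - 3) * ((n : ℚ) + 1) / 96 ∧
      ((numDiamonds T : ℚ)
          = (n : ℚ) * ((n : ℚ) - 1) * ((n : ℚ) - 3) * ((n : ℚ) + 1) / 96 ↔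
        ∀ i j, |(seidel T ^ 2 + (n : ℤ) • (1 : Matrix (Fin n) (Fin n) ℤ)) i j| = 1) := by
  have hdiamond := hT.diamond_identity
  have hone_le := hT.one_le_sq_seidel_sq_add_apply (by rwa [Fintype.card_fin])
  simp only [Fintype.card_fin] at hdiamond hone_le
  set N := seidel T ^ 2 + (n : ℤ) • (1 : Matrix (Fin n) (Fin n) ℤ)
  have hterm (i j : Fin n) : 0 ≤ N i j ^ 2 - 1 := sub_nonneg.2 (hone_le i j)
  set E : ℤ := ∑ i, ∑ j, (N i j ^ 2 - 1)
  have hE : 0 ≤ E := sum_nonneg fun i _ => sum_nonneg fun j _ => hterm i j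
  have hdiamondℚ : (96 * numDiamonds T + 3 * E : ℚ) = n * (n - 1) * (n - 3) * (n + 1) := by
    exact_mod_cast hdiamond
  refine ⟨by rw [le_div_iff₀ (by norm_num)]; linarith [(by exact_mod_cast hE : (0 : ℚ) ≤ E)], ?_⟩
  calc _ ↔ E = 0 := by
        rw [eq_div_iff (by norm_num)]
        constructor <;> intro h
        · exact_mod_cast (by linarith : (E : ℚ) = 0)
        · rw [h, Int.cast_zero] at hdiamondℚ
          linarith
    _ ↔ ∀ i j, N i j ^ 2 - 1 = 0 := by
        simp only [E, sum_eq_zero_iff_of_nonneg fun i _ => sum_nonneg fun j _ => hterm i j,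
          sum_eq_zero_iff_of_nonneg fun j _ => hterm _ j, mem_univ, true_implies]
    _ ↔ _ := by
        simp [sub_eq_zero, abs_eq]
end
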